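/- arXiv:1504.04448 — 2 statements merged into one kernel-verified Lean document; each statement's English description precedes it below -/
import Mathlib

section
/- Define ω : Q(n)_0 → ℤ^n by ω(i) = v^i(b(i)) = (m+n-∑_{t=1}^n i_t, i_1, i_2, ..., i_{n-1}). Then ω maps Q(n)_0 to itself, and ω^{n+1}(i) = i for every i ∈ Q(n)_0; moreover n+1 is the minimal positive integer k such that ω^k is the identity on Q(n)_0 (for m ≥ 3, n ≥ 1). -/
def Qvert (m n : ℕ) (i : Fin n → ℤ) : Prop :=
  (∀ t, 1 ≤ i t) ∧ ∀ s : Fin n, ∑ t ∈ Finset.Iic s, i t ≤ (m : ℤ) + s.val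

/-- `ω(i) = (m+n-|i|, i_1, …, i_{n-1})`. -/
def omegaMap (m n : ℕ) (i : Fin n → ℤ) : Fin n → ℤ :=
  fun t =>
    if t.val = 0 then (m : ℤ) + n - ∑ s, i s
    else i ⟨t.val - 1, lt_of_le_of_lt (Nat.pred_le _) t.isLt⟩

/-!
Prepending `m + n - |i|` to `i` gives the vector `b(i) + 1 ∈ ℤ^{n+1}`, whose coordinates always sum
to `m + n`; on these vectors `ω` is the cyclic shift `u ↦ u + 1` of the index set `ℤ/(n+1)`, so
`ω^{n+1} = id`. The all-ones point of `Q(n)_0` lifts to `(m, 1, …, 1)`, which no shift by `k ≢ 0`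
fixes since `m ≠ 1`. Finally, `ω` preserves `Q(n)_0` because the `s`-th partial sum of `ω(i)` is
`m + n` minus the last `n - s` coordinates of the lift, each of which is at least `1`.
-/

namespace OmegaMap

open Finset Fin.NatCast

variable {m n : ℕ}

def lift (m : ℕ) (i : Fin n → ℤ) : Fin (n + 1) → ℤ :=
  Fin.cons ((m : ℤ) + n - ∑ t, i t) i

lemma lift_injective : Function.Injective (lift (n := n) m) := fun i j h => by
  simpa [lift] using congrArg Fin.tail h

lemma sum_lift (i : Fin n → ℤ) : ∑ u, lift m i u = m + n := by
  simp [lift, Fin.sum_univ_succ]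

lemma omegaMap_eq_init_lift (i : Fin n → ℤ) : omegaMap m n i = Fin.init (lift m i) := by
  funext t
  by_cases ht : t.val = 0
  · have : t.castSucc = 0 := Fin.ext ht
    simp [omegaMap, ht, Fin.init, this, lift]
  · have hs : (⟨t.val - 1, by omega⟩ : Fin n).succ = t.castSucc :=
      Fin.ext (by simp only [Fin.succ_mk, Fin.val_castSucc]; omega)
    simp only [omegaMap, ht, if_false, Fin.init, ← hs, lift, Fin.cons_succ]

lemma sum_omegaMap (i : Fin n → ℤ) : ∑ t, omegaMap m n i t = m + n - lift m i (Fin.last n) := by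
  rw [omegaMap_eq_init_lift, ← sum_lift (m := m) i, Fin.sum_univ_castSucc]
  simp [Fin.init]

lemma lift_omegaMap_add_one (i : Fin n → ℤ) (u : Fin (n + 1)) :
    lift m (omegaMap m n i) (u + 1) = lift m i u := by
  induction u using Fin.lastCases with
  | last => simp [lift, sum_omegaMap]
  | cast t => simp [Fin.coeSucc_eq_succ, lift, omegaMap_eq_init_lift, Fin.init]

lemma lift_iterate_omegaMap_add (i : Fin n → ℤ) (k : ℕ) (u : Fin (n + 1)) :
    lift m ((omegaMap m n)^[k] i) (u + (k : Fin (n + 1))) = lift m i u := by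
  induction k with
  | zero => simp
  | succ k ih =>
    rw [Function.iterate_succ_apply', Nat.cast_succ, ← add_assoc, lift_omegaMap_add_one, ih]

lemma iterate_omegaMap_succ (i : Fin n → ℤ) : (omegaMap m n)^[n + 1] i = i :=
  lift_injective <| funext fun u => by
    simpa using lift_iterate_omegaMap_add (m := m) i (n + 1) u

lemma succ_le_of_iterate_omegaMap_one (hm : m ≠ 1) {k : ℕ} (hk : 0 < k)
    (h : (omegaMap m n)^[k] (fun _ => 1) = fun _ => 1) : n + 1 ≤ k := by
  have hk0 := lift_iterate_omegaMap_add (m := m) (fun _ : Fin n => 1) k 0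
  rw [h, zero_add] at hk0
  have hkn : ((k : ℕ) : Fin (n + 1)) = 0 := by
    by_contra hne
    obtain ⟨t, ht⟩ := Fin.exists_succ_eq.mpr hne
    rw [← ht] at hk0
    simp only [lift, Fin.cons_succ, Fin.cons_zero, sum_const, card_univ, Fintype.card_fin,
      nsmul_one] at hk0
    omega
  exact Nat.le_of_dvd hk (Fin.natCast_eq_zero.mp hkn)

lemma qvert_one (hm : 1 ≤ m) : Qvert m n (fun _ => 1) :=
  ⟨fun _ => le_rfl, fun s => by rw [sum_const, Fin.card_Iic, nsmul_one]; push_cast; omega⟩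

lemma sum_le_of_qvert (hm : 1 ≤ m) {i : Fin n → ℤ} (hQ : Qvert m n i) :
    ∑ t, i t ≤ m + n - 1 := by
  cases n with
  | zero => simpa using hm
  | succ n =>
    have h := hQ.2 (Fin.last n)
    rw [show Iic (Fin.last n) = univ from eq_univ_of_forall fun t => mem_Iic.mpr t.le_last] at h
    push_cast at h ⊢
    omega

lemma one_le_lift (hm : 1 ≤ m) {i : Fin n → ℤ} (hQ : Qvert m n i) (u : Fin (n + 1)) :
    1 ≤ lift m i u := by
  induction u using Fin.cases with
  | zero => simp only [lift, Fin.cons_zero]; linarith [sum_le_of_qvert hm hQ]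
  | succ t => simpa [lift] using hQ.1 t

lemma qvert_omegaMap (hm : 1 ≤ m) {i : Fin n → ℤ} (hQ : Qvert m n i) :
    Qvert m n (omegaMap m n i) := by
  rw [omegaMap_eq_init_lift]
  refine ⟨fun t => one_le_lift hm hQ _, fun s => ?_⟩
  simp only [Fin.init]
  rw [← Fin.sum_Iic_castSucc]
  have hsplit : ∑ u ∈ Iic s.castSucc, lift m i u + ∑ u ∈ Ioi s.castSucc, lift m i u = m + n := by
    rw [← sum_lift (m := m) i,
      ← sum_union (disjoint_left.mpr fun _ h1 h2 => (mem_Iic.mp h1).not_gt (mem_Ioi.mp h2))]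
    congr 1
    ext u
    simp [le_or_gt]
  have hIoi : #(Ioi s.castSucc) • (1 : ℤ) ≤ ∑ u ∈ Ioi s.castSucc, lift m i u :=
    card_nsmul_le_sum _ _ _ fun u _ => one_le_lift hm hQ u
  simp only [Fin.card_Ioi, Fin.val_castSucc, nsmul_one] at hIoi
  omega

end OmegaMap

theorem stmt_6_general (m n : ℕ) (hm : 3 ≤ m) :
    (∀ i : Fin n → ℤ, Qvert m n i → Qvert m n (omegaMap m n i)) ∧
      (∀ i : Fin n → ℤ, Qvert m n i → (omegaMap m n)^[n + 1] i = i) ∧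
      (∀ k : ℕ, 0 < k →
        (∀ i : Fin n → ℤ, Qvert m n i → (omegaMap m n)^[k] i = i) →
        n + 1 ≤ k) :=
  ⟨fun _ => OmegaMap.qvert_omegaMap (by omega),
    fun i _ => OmegaMap.iterate_omegaMap_succ i,
    fun _ hk hfix => OmegaMap.succ_le_of_iterate_omegaMap_one (by omega) hk
      (hfix _ (OmegaMap.qvert_one (by omega)))⟩

theorem stmt_6 (m n : ℕ) (hm : 3 ≤ m) (hn : 1 ≤ n) :
    (∀ i : Fin n → ℤ, Qvert m n i → Qvert m n (omegaMap m n i)) ∧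
      (∀ i : Fin n → ℤ, Qvert m n i → (omegaMap m n)^[n + 1] i = i) ∧
      (∀ k : ℕ, 0 < k →
        (∀ i : Fin n → ℤ, Qvert m n i → (omegaMap m n)^[k] i = i) →
        n + 1 ≤ k) :=
  stmt_6_general m n hm
end

section
/- Consider the map φ from Q(n+1)_0 to pairs, sending i = (i_1,...,i_n,i_{n+1}) to the pair (i', a) with i' = (i_1,...,i_{n-1}, i_n+i_{n+1}-1, 1) and a = (0,...,0, i_{n+1}-1) ∈ ℤ_{≥0}^{n+1}. Then for every i ∈ Q(n+1)_0, i' ∈ Q(n)_0 × {1} (i.e., its first n components form a vertex of Q(n)), a ∈ C(i'), and v̄^{i'}(a) = i. Conversely, every vertex of the form v̄^{i'}(a) with i' ∈ Q(n)_0 × {1} and a ∈ C(i') lies in Q(n+1)_0. Hence Q(n+1)_0 = ∪_{i' ∈ Q(n)_0 × {1}} { v̄^{i'}(a) : a ∈ C(i') }. -/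
def bvec (m n : ℕ) (i : Fin n → ℤ) : Fin (n + 1) → ℤ :=
  Fin.cases ((m : ℤ) + n - 1 - ∑ t, i t) (fun t => i t - 1)

def inC (m n : ℕ) (i : Fin n → ℤ) (a : Fin (n + 1) → ℤ) : Prop :=
  ∀ t, 0 ≤ a t ∧ a t ≤ bvec m n i t

/-- For a vertex `i' = (ip, 1) ∈ Q(n)_0 × {1}` (given by its first `n`
components `ip`) and `a ∈ ℤ^{n+1}`, the vertex
`v̄^{i'}(a) = (ip_1+a_1-a_2, …, ip_n+a_n-a_{n+1}, 1+a_{n+1}) ∈ ℤ^{n+1}`. -/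
def vbarExt {n : ℕ} (ip : Fin n → ℤ) (a : Fin (n + 1) → ℤ) :
    Fin (n + 1) → ℤ :=
  fun t =>
    if h : t.val < n then
      ip ⟨t.val, h⟩ + a ⟨t.val, Nat.lt_succ_of_lt h⟩ -
        a ⟨t.val + 1, Nat.succ_lt_succ h⟩
    else 1 + a ⟨n, Nat.lt_succ_self n⟩

/-- The first `n` components of `i' = (i_1,…,i_{n-1}, i_n+i_{n+1}-1, 1)`. -/
def ipOf {n : ℕ} (i : Fin (n + 1) → ℤ) : Fin n → ℤ :=
  fun t =>
    if t.val = n - 1 then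
      i ⟨n - 1, by omega⟩ + i ⟨n, Nat.lt_succ_self n⟩ - 1
    else i ⟨t.val, Nat.lt_succ_of_lt t.isLt⟩

/-- The vector `a = (0,…,0, i_{n+1}-1)`. -/
def aOf {n : ℕ} (i : Fin (n + 1) → ℤ) : Fin (n + 1) → ℤ :=
  fun t => if t.val = n then i ⟨n, Nat.lt_succ_self n⟩ - 1 else 0

/-!
For a vector with positive integer entries the prefix constraints of `Q(N)_0` follow from the
last one: `∑_{t ≤ s} i_t = ∑_t i_t - ∑_{t > s} i_t ≤ (m + N - 1) - (N - 1 - s)`. So `Q(N)_0` is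
the set of positive vectors with `∑ i ≤ m + N - 1`, and both directions reduce to the telescoping
identity `∑ v̄^{i'}(a) = ∑ i' + a_1` (the trailing `1` of `i'` included), together with the
coordinatewise bounds `v̄^{i'}(a)_t = i'_t + a_t - a_{t+1} ≥ 1`, which are equivalent to
`a_{t+1} ≤ i'_t - 1` when `a_t = 0`.
-/

lemma Fin.sum_castSucc_sub_succ {n : ℕ} (a : Fin (n + 1) → ℤ) :
    ∑ t : Fin n, (a t.castSucc - a t.succ) = a 0 - a (Fin.last n) := by
  have h₁ := Fin.sum_univ_castSucc a
  have h₂ := Fin.sum_univ_succ a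
  rw [Finset.sum_sub_distrib]
  linarith

lemma qvert_of_one_le_of_sum_le {m N : ℕ} {i : Fin N → ℤ} (hpos : ∀ t, 1 ≤ i t)
    (hsum : ∑ t, i t ≤ (m : ℤ) + N - 1) : Qvert m N i := by
  refine ⟨hpos, fun s => ?_⟩
  have hsplit : ∑ t ∈ Finset.Iic s, i t + ∑ t ∈ Finset.Ioi s, i t = ∑ t, i t := by
    simpa [not_le, Finset.filter_ge_eq_Iic, Finset.filter_lt_eq_Ioi] using
      Finset.sum_filter_add_sum_filter_not Finset.univ (· ≤ s) i
  have htail : ((N - 1 - s : ℕ) : ℤ) ≤ ∑ t ∈ Finset.Ioi s, i t := by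
    simpa [Fin.card_Ioi] using Finset.card_nsmul_le_sum (Finset.Ioi s) i 1 fun t _ => hpos t
  have hcast : ((N - 1 - s : ℕ) : ℤ) = N - 1 - s := by omega
  linarith

lemma Qvert.sum_le {m n : ℕ} {i : Fin (n + 1) → ℤ} (h : Qvert m (n + 1) i) :
    ∑ t, i t ≤ (m : ℤ) + n := by
  simpa [← Fin.top_eq_last, Finset.Iic_top] using h.2 (Fin.last n)

lemma inC_iff {m n : ℕ} {ip : Fin n → ℤ} {a : Fin (n + 1) → ℤ} :
    inC m n ip a ↔ (∀ t, 0 ≤ a t) ∧ a 0 ≤ (m : ℤ) + n - 1 - ∑ t, ip t ∧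
      ∀ t : Fin n, a t.succ ≤ ip t - 1 := by
  simp only [inC, bvec, forall_and, Fin.forall_fin_succ, Fin.cases_zero, Fin.cases_succ]

section vbarExt

variable {n : ℕ} (ip : Fin n → ℤ) (a : Fin (n + 1) → ℤ)

@[simp]
lemma vbarExt_castSucc (t : Fin n) : vbarExt ip a t.castSucc = ip t + a t.castSucc - a t.succ :=
  dif_pos t.isLt

@[simp]
lemma vbarExt_last : vbarExt ip a (Fin.last n) = 1 + a (Fin.last n) :=
  dif_neg (lt_irrefl n)

lemma sum_vbarExt : ∑ t, vbarExt ip a t = ∑ t, ip t + a 0 + 1 := by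
  rw [Fin.sum_univ_castSucc]
  simp only [vbarExt_castSucc, vbarExt_last, add_sub_assoc, Finset.sum_add_distrib,
    Fin.sum_castSucc_sub_succ]
  ring

end vbarExt

lemma qvert_vbarExt {m n : ℕ} {ip : Fin n → ℤ} {a : Fin (n + 1) → ℤ} (ha : inC m n ip a) :
    Qvert m (n + 1) (vbarExt ip a) := by
  obtain ⟨ha_nonneg, ha_zero, ha_succ⟩ := inC_iff.1 ha
  refine qvert_of_one_le_of_sum_le (fun t => ?_) ?_
  · induction t using Fin.lastCases with
    | last => linarith [vbarExt_last ip a, ha_nonneg (Fin.last n)]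
    | cast t => linarith [vbarExt_castSucc ip a t, ha_nonneg t.castSucc, ha_succ t]
  · rw [sum_vbarExt]
    push_cast
    linarith

lemma qvert_inC_of_vbarExt_eq {m n : ℕ} {ip : Fin n → ℤ} {a : Fin (n + 1) → ℤ}
    {i : Fin (n + 1) → ℤ} (hv : vbarExt ip a = i) (hi : Qvert m (n + 1) i)
    (ha_nonneg : ∀ t, 0 ≤ a t) (ha_castSucc : ∀ t : Fin n, a t.castSucc = 0) :
    Qvert m n ip ∧ inC m n ip a := by
  have hsum : ∑ t, ip t + a 0 + 1 ≤ (m : ℤ) + n := by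
    rw [← sum_vbarExt, hv]
    exact hi.sum_le
  have hstep (t : Fin n) : ip t - a t.succ = i t.castSucc := by
    rw [← hv, vbarExt_castSucc, ha_castSucc]
    ring
  refine ⟨qvert_of_one_le_of_sum_le (fun t => ?_) ?_, inC_iff.2 ⟨ha_nonneg, ?_, fun t => ?_⟩⟩
  · linarith [hi.1 t.castSucc, ha_nonneg t.succ, hstep t]
  · linarith [ha_nonneg 0]
  · linarith
  · linarith [hi.1 t.castSucc, hstep t]

section ipOf

variable {n : ℕ} (i : Fin (n + 1) → ℤ)

lemma aOf_castSucc (t : Fin n) : aOf i t.castSucc = 0 :=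
  if_neg t.isLt.ne

lemma aOf_last : aOf i (Fin.last n) = i (Fin.last n) - 1 :=
  if_pos rfl

lemma aOf_nonneg (hi : ∀ t, 1 ≤ i t) (t : Fin (n + 1)) : 0 ≤ aOf i t := by
  induction t using Fin.lastCases with
  | last => linarith [aOf_last i, hi (Fin.last n)]
  | cast t => rw [aOf_castSucc]

lemma vbarExt_ipOf_aOf : vbarExt (ipOf i) (aOf i) = i := by
  funext t
  induction t using Fin.lastCases with
  | last => rw [vbarExt_last, aOf_last]; ring
  | cast t =>
    rw [vbarExt_castSucc, aOf_castSucc]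
    by_cases ht : t.val = n - 1
    · have hsucc : t.succ = Fin.last n := Fin.ext (by simp; omega)
      have hcast : t.castSucc = ⟨n - 1, by omega⟩ := Fin.ext (by simpa using ht)
      rw [hsucc, aOf_last, ipOf, if_pos ht, hcast, show Fin.last n = ⟨n, n.lt_succ_self⟩ from rfl]
      ring
    · rw [aOf, if_neg (by simp; omega), ipOf, if_neg ht, add_zero, sub_zero]
      rfl

end ipOf

theorem stmt_16_general (m n : ℕ) :
    (∀ i : Fin (n + 1) → ℤ, Qvert m (n + 1) i →
        Qvert m n (ipOf i) ∧ inC m n (ipOf i) (aOf i) ∧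
          vbarExt (ipOf i) (aOf i) = i) ∧
      (∀ (ip : Fin n → ℤ) (a : Fin (n + 1) → ℤ), Qvert m n ip →
        inC m n ip a → Qvert m (n + 1) (vbarExt ip a)) := by
  refine ⟨fun i hi => ?_, fun ip a _ ha => qvert_vbarExt ha⟩
  have hv := vbarExt_ipOf_aOf i
  obtain ⟨hQ, hC⟩ := qvert_inC_of_vbarExt_eq hv hi (aOf_nonneg i hi.1) (aOf_castSucc i)
  exact ⟨hQ, hC, hv⟩

theorem stmt_16 (m n : ℕ) (hm : 3 ≤ m) (hn : 1 ≤ n) :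
    (∀ i : Fin (n + 1) → ℤ, Qvert m (n + 1) i →
        Qvert m n (ipOf i) ∧ inC m n (ipOf i) (aOf i) ∧
          vbarExt (ipOf i) (aOf i) = i) ∧
      (∀ (ip : Fin n → ℤ) (a : Fin (n + 1) → ℤ), Qvert m n ip →
        inC m n ip a → Qvert m (n + 1) (vbarExt ip a)) :=
  stmt_16_general m n
end
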